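/- arXiv:1909.11372 — 2 statements merged into one kernel-verified Lean document; each statement's English description precedes it below -/
import Mathlib

section
/- Let (a_k)_{k≥1} be Wiener-class sequences and (E_k)_{k≥1} bounded semi-infinite real matrices with the decay property, and suppose the matrices A_k := T(a_k) + E_k form a Cauchy sequence with respect to the infinity norm ‖·‖_∞. Then there exist a Wiener-class sequence a and a bounded semi-infinite matrix E with the decay property such that lim_{k→∞} ‖A_k − (T(a)+E)‖_∞ = 0; moreover lim_{k→∞} ‖a_k − a‖_W = 0 and lim_{k→∞} ‖E_k − E‖_∞ = 0. (The class QT_∞^d is complete in the infinity norm.) -/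
open Filter Topology

/-- Every row of `A` is absolutely summable. -/
def RowsSummable (A : ℕ → ℕ → ℝ) : Prop := ∀ i, Summable fun j => |A i j|

/-- The infinity norm of a semi-infinite matrix: the supremum of the row sums. -/
noncomputable def normInf (A : ℕ → ℕ → ℝ) : ℝ := ⨆ i, ∑' j, |A i j|

/-- `A` is bounded: all row sums are finite and their supremum is finite. -/
def MatBounded (A : ℕ → ℕ → ℝ) : Prop :=
  RowsSummable A ∧ BddAbove (Set.range fun i => ∑' j, |A i j|)

/-- `A` has the decay property: all row sums are finite and tend to zero. -/
def HasDecay (A : ℕ → ℕ → ℝ) : Prop :=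
  RowsSummable A ∧ Tendsto (fun i => ∑' j, |A i j|) atTop (𝓝 0)

/-- The semi-infinite Toeplitz matrix associated with a two-sided sequence:
`T(a)_{ij} = a_{j−i}`. -/
noncomputable def Toep (a : ℤ → ℝ) : ℕ → ℕ → ℝ := fun i j => a ((j : ℤ) - (i : ℤ))

/-- Convolution of two-sided sequences. -/
noncomputable def zconv (a b : ℤ → ℝ) : ℤ → ℝ := fun n => ∑' k : ℤ, a k * b (n - k)

/-!
Row `i` of `T(b)` sums `|b n|` over `n ≥ -i`, so these row sums tend to `‖b‖_W`; if the row sums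
of `F` tend to `0`, comparing rows far down gives `‖b‖_W ≤ ‖T(b) + F‖_∞`. Applied to
`A_m - A_n = T(a_m - a_n) + (E_m - E_n)`, this makes `(a_k)` Cauchy in the Wiener norm, and then
`(E_k)` Cauchy in `‖·‖_∞`. The pointwise limits are limits in these norms (Fatou's lemma for sums,
applied to all rows at once), and the decay property survives `‖·‖_∞`-limits.
-/

lemma tendsto_nhds_zero_of_forall_eventually_le {α : Type*} {l : Filter α} {u : α → ℝ}
    (h0 : ∀ x, 0 ≤ u x) (h : ∀ ε > 0, ∀ᶠ x in l, u x ≤ ε) : Tendsto u l (𝓝 0) :=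
  tendsto_order.2 ⟨fun _ hc => Eventually.of_forall fun x => hc.trans_le (h0 x),
    fun ε hε => (h (ε / 2) (half_pos hε)).mono fun _ hx => hx.trans_lt (half_lt_self hε)⟩

section AbsSummable

variable {ι : Type*}

lemma summable_abs_of_abs_le_add {u v w : ι → ℝ} (hu : Summable fun x => |u x|)
    (hv : Summable fun x => |v x|) (h : ∀ x, |w x| ≤ |u x| + |v x|) :
    Summable fun x => |w x| :=
  (hu.add hv).of_nonneg_of_le (fun _ => abs_nonneg _) h

lemma tsum_abs_le_add_of_abs_le {u v w : ι → ℝ} (hu : Summable fun x => |u x|)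
    (hv : Summable fun x => |v x|) (h : ∀ x, |w x| ≤ |u x| + |v x|) :
    ∑' x, |w x| ≤ ∑' x, |u x| + ∑' x, |v x| :=
  (Summable.tsum_le_tsum h (summable_abs_of_abs_le_add hu hv h) (hu.add hv)).trans
    (hu.tsum_add hv).le

lemma summable_abs_sub {u v : ι → ℝ} (hu : Summable fun x => |u x|)
    (hv : Summable fun x => |v x|) : Summable fun x => |u x - v x| :=
  summable_abs_of_abs_le_add hu hv fun _ => abs_sub _ _

lemma tsum_abs_sub_le_of_tendsto {f : ℕ → ι → ℝ} {g h : ι → ℝ} {ε : ℝ}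
    (hfg : ∀ x, Tendsto (f · x) atTop (𝓝 (g x)))
    (hf : ∀ᶠ n in atTop, Summable (fun x => |h x - f n x|) ∧ ∑' x, |h x - f n x| ≤ ε) :
    Summable (fun x => |h x - g x|) ∧ ∑' x, |h x - g x| ≤ ε := by
  have hpartial : ∀ s : Finset ι, ∑ x ∈ s, |h x - g x| ≤ ε := fun s =>
    le_of_tendsto (tendsto_finsetSum s fun x _ => ((hfg x).const_sub (h x)).abs)
      (hf.mono fun n hn => (hn.1.sum_le_tsum s fun _ _ => abs_nonneg _).trans hn.2)
  exact ⟨summable_of_sum_le (fun _ => abs_nonneg _) hpartial,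
    Real.tsum_le_of_sum_le (fun _ => abs_nonneg _) hpartial⟩

theorem exists_uniform_limit_of_tsum_abs_sub_le {ρ : Type*} (f : ℕ → ρ → ι → ℝ)
    (d : ℕ × ℕ → ℝ) (hd : Tendsto d atTop (𝓝 0)) (hf : ∀ k r, Summable fun x => |f k r x|)
    (hfd : ∀ m n r, ∑' x, |f m r x - f n r x| ≤ d (m, n)) :
    ∃ g : ρ → ι → ℝ, ∀ ε > 0, ∀ᶠ k in atTop, ∀ r,
      Summable (fun x => |f k r x - g r x|) ∧ ∑' x, |f k r x - g r x| ≤ ε := by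
  have hsub : ∀ m n r, Summable fun x => |f m r x - f n r x| :=
    fun m n r => summable_abs_sub (hf m r) (hf n r)
  have hcauchy : ∀ r x, CauchySeq fun k => f k r x := fun r x =>
    cauchySeq_iff_tendsto_dist_atTop_0.2 <| squeeze_zero (fun _ => dist_nonneg)
      (fun p => ((hsub p.1 p.2 r).le_tsum x fun _ _ => abs_nonneg _).trans (hfd p.1 p.2 r)) hd
  choose g hg using fun r x => cauchySeq_tendsto_of_complete (hcauchy r x)
  refine ⟨g, fun ε hε => ?_⟩
  obtain ⟨N, hN⟩ := eventually_atTop_prod_self'.1 (hd.eventually (eventually_le_nhds hε))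
  filter_upwards [eventually_ge_atTop N] with m hm r
  exact tsum_abs_sub_le_of_tendsto (hg r) <| (eventually_ge_atTop N).mono fun n hn =>
    ⟨hsub m n r, (hfd m n r).trans (hN m hm n hn)⟩

theorem exists_tendsto_tsum_abs_sub (a : ℕ → ι → ℝ) (ha : ∀ k, Summable fun x => |a k x|)
    (hc : Tendsto (fun p : ℕ × ℕ => ∑' x, |a p.1 x - a p.2 x|) atTop (𝓝 0)) :
    ∃ b : ι → ℝ, (Summable fun x => |b x|) ∧
      Tendsto (fun k => ∑' x, |a k x - b x|) atTop (𝓝 0) := by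
  obtain ⟨b, hb⟩ := exists_uniform_limit_of_tsum_abs_sub_le (fun k (_ : Unit) => a k) _ hc
    (fun k _ => ha k) fun _ _ _ => le_rfl
  obtain ⟨k, hk⟩ := (hb 1 one_pos).exists
  refine ⟨b (), summable_abs_of_abs_le_add (ha k) (hk ()).1 fun x => ?_,
    tendsto_nhds_zero_of_forall_eventually_le (fun _ => tsum_nonneg fun _ => abs_nonneg _)
      fun ε hε => (hb ε hε).mono fun _ h => (h ()).2⟩
  simpa using abs_sub (a k x) (a k x - b () x)

end AbsSummable

section Matrix

variable {A B C : ℕ → ℕ → ℝ}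

lemma normInf_nonneg (A : ℕ → ℕ → ℝ) : 0 ≤ normInf A :=
  Real.iSup_nonneg fun _ => tsum_nonneg fun _ => abs_nonneg _

lemma normInf_le {c : ℝ} (h : ∀ i, ∑' j, |A i j| ≤ c) : normInf A ≤ c := ciSup_le h

lemma MatBounded.tsum_row_le_normInf (hA : MatBounded A) (i : ℕ) :
    ∑' j, |A i j| ≤ normInf A :=
  le_ciSup hA.2 i

lemma matBounded_of_tsum_row_le {c : ℝ} (hA : RowsSummable A) (h : ∀ i, ∑' j, |A i j| ≤ c) :
    MatBounded A :=
  ⟨hA, c, by rintro _ ⟨i, rfl⟩; exact h i⟩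

lemma HasDecay.matBounded (hA : HasDecay A) : MatBounded A :=
  ⟨hA.1, hA.2.bddAbove_range⟩

lemma tsum_row_le_normInf_add (hA : MatBounded A) (hB : MatBounded B)
    (h : ∀ i j, |C i j| ≤ |A i j| + |B i j|) (i : ℕ) :
    ∑' j, |C i j| ≤ normInf A + normInf B :=
  (tsum_abs_le_add_of_abs_le (hA.1 i) (hB.1 i) (h i)).trans
    (add_le_add (hA.tsum_row_le_normInf i) (hB.tsum_row_le_normInf i))

lemma MatBounded.of_abs_le_add (hA : MatBounded A) (hB : MatBounded B)
    (h : ∀ i j, |C i j| ≤ |A i j| + |B i j|) : MatBounded C :=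
  matBounded_of_tsum_row_le (fun i => summable_abs_of_abs_le_add (hA.1 i) (hB.1 i) (h i))
    (tsum_row_le_normInf_add hA hB h)

lemma normInf_le_add_of_abs_le (hA : MatBounded A) (hB : MatBounded B)
    (h : ∀ i j, |C i j| ≤ |A i j| + |B i j|) : normInf C ≤ normInf A + normInf B :=
  normInf_le (tsum_row_le_normInf_add hA hB h)

lemma MatBounded.add (hA : MatBounded A) (hB : MatBounded B) : MatBounded (A + B) :=
  hA.of_abs_le_add hB fun _ _ => abs_add_le _ _

lemma MatBounded.sub (hA : MatBounded A) (hB : MatBounded B) : MatBounded (A - B) :=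
  hA.of_abs_le_add hB fun _ _ => abs_sub _ _

lemma normInf_add_le (hA : MatBounded A) (hB : MatBounded B) :
    normInf (A + B) ≤ normInf A + normInf B :=
  normInf_le_add_of_abs_le hA hB fun _ _ => abs_add_le _ _

lemma HasDecay.sub (hA : HasDecay A) (hB : HasDecay B) : HasDecay (A - B) := by
  refine ⟨fun i => summable_abs_sub (hA.1 i) (hB.1 i), ?_⟩
  exact squeeze_zero (fun _ => tsum_nonneg fun _ => abs_nonneg _)
    (fun i => tsum_abs_le_add_of_abs_le (hA.1 i) (hB.1 i) fun _ => abs_sub _ _)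
    (by simpa using hA.2.add hB.2)

theorem exists_tendsto_normInf_sub (M : ℕ → ℕ → ℕ → ℝ) (hM : ∀ k, MatBounded (M k))
    (hc : Tendsto (fun p : ℕ × ℕ => normInf (M p.1 - M p.2)) atTop (𝓝 0)) :
    ∃ E, MatBounded E ∧ Tendsto (fun k => normInf (M k - E)) atTop (𝓝 0) := by
  obtain ⟨E, hE⟩ := exists_uniform_limit_of_tsum_abs_sub_le M _ hc (fun k => (hM k).1)
    fun m n => ((hM m).sub (hM n)).tsum_row_le_normInf
  obtain ⟨k, hk⟩ := (hE 1 one_pos).exists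
  have hdiff : MatBounded (M k - E) :=
    matBounded_of_tsum_row_le (fun i => (hk i).1) fun i => (hk i).2
  refine ⟨E, (hM k).of_abs_le_add hdiff fun i j => ?_,
    tendsto_nhds_zero_of_forall_eventually_le (fun _ => normInf_nonneg _)
      fun ε hε => (hE ε hε).mono fun _ h => normInf_le fun i => (h i).2⟩
  simpa using abs_sub (M k i j) (M k i j - E i j)

lemma hasDecay_of_tendsto_normInf {M : ℕ → ℕ → ℕ → ℝ} {E : ℕ → ℕ → ℝ}
    (hM : ∀ k, HasDecay (M k)) (hE : MatBounded E)
    (h : Tendsto (fun k => normInf (M k - E)) atTop (𝓝 0)) : HasDecay E := by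
  refine ⟨hE.1, tendsto_nhds_zero_of_forall_eventually_le
    (fun _ => tsum_nonneg fun _ => abs_nonneg _) fun ε hε => ?_⟩
  obtain ⟨k, hk⟩ := (h.eventually (eventually_le_nhds (half_pos hε))).exists
  have hdiff := (hM k).matBounded.sub hE
  filter_upwards [(hM k).2.eventually (eventually_le_nhds (half_pos hε))] with i hi
  calc ∑' j, |E i j| ≤ ∑' j, |M k i j| + ∑' j, |(M k - E) i j| :=
        tsum_abs_le_add_of_abs_le ((hM k).1 i) (hdiff.1 i) fun j => by
          simpa using abs_sub (M k i j) (M k i j - E i j)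
    _ ≤ ε / 2 + ε / 2 := add_le_add hi ((hdiff.tsum_row_le_normInf i).trans hk)
    _ = ε := add_halves ε

end Matrix

section Toeplitz

variable {b : ℤ → ℝ}

lemma toep_sub (a b : ℤ → ℝ) : Toep (a - b) = Toep a - Toep b := rfl

lemma natCast_sub_injective (i : ℕ) : Function.Injective fun j : ℕ => (j : ℤ) - i :=
  fun _ _ h => by simpa using h

lemma summable_abs_toep_row (hb : Summable fun n => |b n|) (i : ℕ) :
    Summable fun j => |Toep b i j| :=
  hb.comp_injective (natCast_sub_injective i)

lemma tsum_abs_toep_row_le (hb : Summable fun n => |b n|) (i : ℕ) :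
    ∑' j, |Toep b i j| ≤ ∑' n, |b n| :=
  Summable.tsum_le_tsum_of_inj _ (natCast_sub_injective i) (fun _ _ => abs_nonneg _)
    (fun _ => le_rfl) (summable_abs_toep_row hb i) hb

lemma matBounded_toep (hb : Summable fun n => |b n|) : MatBounded (Toep b) :=
  matBounded_of_tsum_row_le (summable_abs_toep_row hb) (tsum_abs_toep_row_le hb)

lemma normInf_toep_le (hb : Summable fun n => |b n|) : normInf (Toep b) ≤ ∑' n, |b n| :=
  normInf_le (tsum_abs_toep_row_le hb)

lemma tendsto_tsum_abs_toep_row (hb : Summable fun n => |b n|) :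
    Tendsto (fun i => ∑' j, |Toep b i j|) atTop (𝓝 (∑' n, |b n|)) := by
  have hrow : ∀ i : ℕ,
      ∑' j, |Toep b i j| = ∑' n, (Set.Ici (-(i : ℤ))).indicator (fun n => |b n|) n := by
    intro i
    rw [← (natCast_sub_injective i).tsum_eq]
    · exact tsum_congr fun j => (Set.indicator_of_mem (by simp) (fun n => |b n|)).symm
    · intro n hn
      have : -(i : ℤ) ≤ n := Set.mem_Ici.1 (Set.support_indicator_subset hn)
      exact ⟨(n + i).toNat, show ((n + i).toNat : ℤ) - i = n by omega⟩
  simp_rw [hrow]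
  refine tendsto_tsum_of_dominated_convergence hb (fun n => ?_)
    (Eventually.of_forall fun i n => ?_)
  · refine tendsto_const_nhds.congr' ?_
    filter_upwards [eventually_ge_atTop (-n).toNat] with i hi
    exact (Set.indicator_of_mem (Set.mem_Ici.2 (by omega)) (fun n => |b n|)).symm
  · simpa using norm_indicator_le_norm_self (fun n => |b n|) n

lemma tsum_abs_le_of_tsum_toep_add_row_le {F : ℕ → ℕ → ℝ} {c : ℝ}
    (hb : Summable fun n => |b n|) (hF : HasDecay F)
    (h : ∀ i, ∑' j, |Toep b i j + F i j| ≤ c) : ∑' n, |b n| ≤ c := by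
  have hrow : ∀ i, ∑' j, |Toep b i j| ≤ c + ∑' j, |F i j| := fun i =>
    (tsum_abs_le_add_of_abs_le (summable_abs_of_abs_le_add (summable_abs_toep_row hb i)
      (hF.1 i) fun _ => abs_add_le _ _) (hF.1 i) fun j => by
        simpa using abs_sub (Toep b i j + F i j) (F i j)).trans (add_le_add_left (h i) _)
  exact le_of_tendsto_of_tendsto' (tendsto_tsum_abs_toep_row hb)
    (by simpa using tendsto_const_nhds.add hF.2) hrow

lemma tsum_abs_le_normInf_toep_add {F : ℕ → ℕ → ℝ} (hb : Summable fun n => |b n|)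
    (hF : HasDecay F) : ∑' n, |b n| ≤ normInf (Toep b + F) :=
  tsum_abs_le_of_tsum_toep_add_row_le hb hF
    ((matBounded_toep hb).add hF.matBounded).tsum_row_le_normInf

lemma normInf_toep_add_le {F : ℕ → ℕ → ℝ} (hb : Summable fun n => |b n|)
    (hF : MatBounded F) : normInf (Toep b + F) ≤ ∑' n, |b n| + normInf F :=
  (normInf_add_le (matBounded_toep hb) hF).trans (add_le_add_left (normInf_toep_le hb) _)

lemma normInf_le_normInf_toep_add {F : ℕ → ℕ → ℝ} (hb : Summable fun n => |b n|)
    (hF : MatBounded F) : normInf F ≤ normInf (Toep b + F) + ∑' n, |b n| :=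
  (normInf_le_add_of_abs_le ((matBounded_toep hb).add hF) (matBounded_toep hb) fun i j => by
    simpa using abs_sub (Toep b i j + F i j) (Toep b i j)).trans
    (add_le_add_right (normInf_toep_le hb) _)

lemma toep_add_sub_toep_add (a b : ℤ → ℝ) (E F : ℕ → ℕ → ℝ) :
    Toep a + E - (Toep b + F) = Toep (a - b) + (E - F) := by
  rw [toep_sub]; abel

end Toeplitz

theorem stmt9_general (a : ℕ → ℤ → ℝ) (ha : ∀ k, Summable fun n => |a k n|)
    (Ek : ℕ → ℕ → ℕ → ℝ) (hEkd : ∀ k, HasDecay (Ek k))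
    (hcauchy : ∀ ε : ℝ, 0 < ε → ∃ N : ℕ, ∀ m ≥ N, ∀ n ≥ N,
      normInf (fun i j => (Toep (a m) i j + Ek m i j) - (Toep (a n) i j + Ek n i j)) < ε) :
    ∃ (aL : ℤ → ℝ) (E : ℕ → ℕ → ℝ),
      Summable (fun n => |aL n|) ∧ MatBounded E ∧ HasDecay E ∧
      Tendsto (fun k => normInf
        (fun i j => (Toep (a k) i j + Ek k i j) - (Toep aL i j + E i j))) atTop (𝓝 0) ∧
      Tendsto (fun k => ∑' n : ℤ, |a k n - aL n|) atTop (𝓝 0) ∧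
      Tendsto (fun k => normInf (fun i j => Ek k i j - E i j)) atTop (𝓝 0) := by
  have hEb : ∀ k, MatBounded (Ek k) := fun k => (hEkd k).matBounded
  have hda : ∀ m n, Summable fun t => |(a m - a n) t| := fun m n => summable_abs_sub (ha m) (ha n)
  have hA : Tendsto (fun p : ℕ × ℕ => normInf (Toep (a p.1 - a p.2) + (Ek p.1 - Ek p.2)))
      atTop (𝓝 0) :=
    tendsto_order.2 ⟨fun _ hc => Eventually.of_forall fun _ => hc.trans_le (normInf_nonneg _),
      fun ε hε => eventually_atTop_prod_self'.2 <| (hcauchy ε hε).imp fun _ hN m hm n hn => by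
        rw [← toep_add_sub_toep_add]; exact hN m hm n hn⟩
  have ha_cauchy : Tendsto (fun p : ℕ × ℕ => ∑' t, |a p.1 t - a p.2 t|) atTop (𝓝 0) :=
    squeeze_zero (fun _ => tsum_nonneg fun _ => abs_nonneg _)
      (fun p => tsum_abs_le_normInf_toep_add (hda p.1 p.2) ((hEkd p.1).sub (hEkd p.2))) hA
  obtain ⟨aL, haL, ha_conv⟩ := exists_tendsto_tsum_abs_sub a ha ha_cauchy
  have hE_cauchy : Tendsto (fun p : ℕ × ℕ => normInf (Ek p.1 - Ek p.2)) atTop (𝓝 0) :=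
    squeeze_zero (fun _ => normInf_nonneg _)
      (fun p => normInf_le_normInf_toep_add (hda p.1 p.2) ((hEb p.1).sub (hEb p.2)))
      (by simpa using hA.add ha_cauchy)
  obtain ⟨E, hE, hE_conv⟩ := exists_tendsto_normInf_sub Ek hEb hE_cauchy
  have hA_conv : ∀ k, normInf (Toep (a k) + Ek k - (Toep aL + E)) ≤
      ∑' t, |a k t - aL t| + normInf (Ek k - E) := fun k => by
    rw [toep_add_sub_toep_add]
    exact normInf_toep_add_le (summable_abs_sub (ha k) haL) ((hEb k).sub hE)
  exact ⟨aL, E, haL, hE, hasDecay_of_tendsto_normInf hEkd hE hE_conv,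
    squeeze_zero (fun _ => normInf_nonneg _) hA_conv (by simpa using ha_conv.add hE_conv),
    ha_conv, hE_conv⟩

theorem stmt9 (a : ℕ → ℤ → ℝ) (ha : ∀ k, Summable fun n => |a k n|)
    (Ek : ℕ → ℕ → ℕ → ℝ) (hEk : ∀ k, MatBounded (Ek k)) (hEkd : ∀ k, HasDecay (Ek k))
    (hcauchy : ∀ ε : ℝ, 0 < ε → ∃ N : ℕ, ∀ m ≥ N, ∀ n ≥ N,
      normInf (fun i j => (Toep (a m) i j + Ek m i j) - (Toep (a n) i j + Ek n i j)) < ε) :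
    ∃ (aL : ℤ → ℝ) (E : ℕ → ℕ → ℝ),
      Summable (fun n => |aL n|) ∧ MatBounded E ∧ HasDecay E ∧
      Tendsto (fun k => normInf
        (fun i j => (Toep (a k) i j + Ek k i j) - (Toep aL i j + E i j))) atTop (𝓝 0) ∧
      Tendsto (fun k => ∑' n : ℤ, |a k n - aL n|) atTop (𝓝 0) ∧
      Tendsto (fun k => normInf (fun i j => Ek k i j - E i j)) atTop (𝓝 0) :=
  stmt9_general a ha Ek hEkd hcauchy
end

section
/- Assume there exists i₀ ∈ {−1,0,1} such that |a_{i₀}(ζ)| < a_{i₀}(1) for every ζ ∈ ℂ with |ζ| = 1 and ζ ≠ 1. Then for every ζ ∈ ℂ with |ζ| = 1 and ζ ≠ 1: the equation a_1(ζ)λ² + (a_0(ζ)−1)λ + a_{−1}(ζ) = 0 has no solution λ with |λ| = 1; it has exactly one solution λ with |λ| < 1; and if a_1(ζ) ≠ 0, it also has a solution with |λ| > 1. -/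
/-!
The three coefficients `a_{−1}(ζ), a_0(ζ), a_1(ζ)` have norms at most `a_{−1}(1), a_0(1), a_1(1)`,
with strict inequality for `i₀`, so their norms sum to less than `1`. For such coefficients the
fixed-point form `λ = a_{−1} + a_0 λ + a_1 λ²` of the equation rules out roots on the unit circle,
and when `a_1 ≠ 0` Vieta's formulas give `‖a_1‖ (‖λ₁‖ ‖λ₂‖ + 1) < ‖1 - a_0‖ ≤ ‖a_1‖ (‖λ₁‖ + ‖λ₂‖)`,
i.e. `(‖λ₁‖ - 1) (‖λ₂‖ - 1) < 0`: one root lies inside the unit disc and the other outside.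
-/

open Filter Topology

/- Convention: the transition probabilities a_{i,j} (i,j ∈ {−1,0,1}) are encoded
as `v : Fin 3 → Fin 3 → ℝ`, where the index `0, 1, 2` corresponds to `−1, 0, 1`. -/

/-- `symb v i z = a_i(z) = a_{i,−1} z⁻¹ + a_{i,0} + a_{i,1} z`. -/
noncomputable def symb (v : Fin 3 → Fin 3 → ℝ) (i : Fin 3) (z : ℂ) : ℂ :=
  (v i 0 : ℂ) * z⁻¹ + (v i 1 : ℂ) + (v i 2 : ℂ) * z

/-- `symbOne v i = a_i(1) = a_{i,−1} + a_{i,0} + a_{i,1}` (as a real number). -/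
def symbOne (v : Fin 3 → Fin 3 → ℝ) (i : Fin 3) : ℝ := v i 0 + v i 1 + v i 2

/-- The fixed-point iteration θ_0 = 0, θ_{k+1} = a_{−1}(ζ) + a_0(ζ) θ_k + a_1(ζ) θ_k². -/
noncomputable def quadIter (am1 a0 a1 : ℂ) : ℕ → ℂ
  | 0 => 0
  | k + 1 => am1 + a0 * quadIter am1 a0 a1 k + a1 * (quadIter am1 a0 a1 k) ^ 2

theorem exists_quadratic_eq_mul_sub_mul_sub {K : Type*} [Field K] [IsAlgClosed K]
    [NeZero (2 : K)] {c : K} (hc : c ≠ 0) (b a : K) :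
    ∃ r s : K, ∀ x, c * x ^ 2 + b * x + a = c * (x - r) * (x - s) := by
  obtain ⟨d, hd⟩ := IsAlgClosed.exists_pow_nat_eq (discrim c b a) two_pos
  refine ⟨(-b + d) / (2 * c), (-b - d) / (2 * c), fun x => ?_⟩
  rw [discrim] at hd
  field_simp
  linear_combination hd

section QuadraticRoots

variable {K : Type*} [NormedField K] {a b c : K}

theorem norm_ne_one_of_quadratic_root (h : ‖a‖ + ‖b‖ + ‖c‖ < 1) {x : K}
    (hx : c * x ^ 2 + (b - 1) * x + a = 0) : ‖x‖ ≠ 1 := by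
  intro hx1
  have hfix : x = a + b * x + c * x ^ 2 := by linear_combination -hx
  have : ‖a + b * x + c * x ^ 2‖ ≤ ‖a‖ + ‖b‖ + ‖c‖ :=
    calc _ ≤ ‖a‖ + ‖b * x‖ + ‖c * x ^ 2‖ := norm_add₃_le
      _ = _ := by simp [hx1]
  rw [← hfix, hx1] at this
  linarith

theorem norm_add_norm_lt_norm_one_sub (h : ‖a‖ + ‖b‖ + ‖c‖ < 1) : ‖a‖ + ‖c‖ < ‖1 - b‖ := by
  have := norm_sub_norm_le (1 : K) b
  rw [norm_one] at this
  linarith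

theorem norm_sub_one_mul_norm_sub_one_neg (h : ‖a‖ + ‖b‖ + ‖c‖ < 1) (hc : c ≠ 0) {r s : K}
    (hrs : ∀ x, c * x ^ 2 + (b - 1) * x + a = c * (x - r) * (x - s)) :
    (‖r‖ - 1) * (‖s‖ - 1) < 0 := by
  have hprod : a = c * (r * s) := by linear_combination hrs 0
  have hsum : 1 - b = c * (r + s) := by linear_combination hrs 0 - hrs 1
  have hlower := norm_add_norm_lt_norm_one_sub h
  have hupper : ‖1 - b‖ ≤ ‖c‖ * (‖r‖ + ‖s‖) := by
    rw [hsum, norm_mul]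
    gcongr
    exact norm_add_le r s
  have hnorm : ‖c‖ * (‖r‖ * ‖s‖ + 1) < ‖c‖ * (‖r‖ + ‖s‖) := by
    rw [hprod, norm_mul, norm_mul] at hlower
    linarith
  nlinarith [lt_of_mul_lt_mul_left hnorm (norm_nonneg c)]

theorem exists_quadratic_roots_norm_lt_one_lt_norm [IsAlgClosed K] [NeZero (2 : K)]
    (h : ‖a‖ + ‖b‖ + ‖c‖ < 1) (hc : c ≠ 0) :
    ∃ r s : K, (∀ x, c * x ^ 2 + (b - 1) * x + a = 0 ↔ x = r ∨ x = s) ∧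
      ‖r‖ < 1 ∧ 1 < ‖s‖ := by
  obtain ⟨r, s, hrs⟩ := exists_quadratic_eq_mul_sub_mul_sub hc (b - 1) a
  have hroots : ∀ x, c * x ^ 2 + (b - 1) * x + a = 0 ↔ x = r ∨ x = s := by
    simp [hrs, hc, sub_eq_zero]
  rcases mul_neg_iff.mp (norm_sub_one_mul_norm_sub_one_neg h hc hrs) with ⟨hr, hs⟩ | ⟨hr, hs⟩
  · exact ⟨s, r, fun x => (hroots x).trans or_comm, by linarith, by linarith⟩
  · exact ⟨r, s, hroots, by linarith, by linarith⟩

theorem existsUnique_quadratic_root_norm_lt_one [IsAlgClosed K] [NeZero (2 : K)]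
    (h : ‖a‖ + ‖b‖ + ‖c‖ < 1) :
    ∃! x : K, c * x ^ 2 + (b - 1) * x + a = 0 ∧ ‖x‖ < 1 := by
  rcases eq_or_ne c 0 with rfl | hc
  · have hlt := norm_add_norm_lt_norm_one_sub h
    rw [norm_zero, add_zero] at hlt
    have hb : 1 - b ≠ 0 := norm_pos_iff.mp ((norm_nonneg a).trans_lt hlt)
    refine ⟨a / (1 - b), ⟨by field_simp; ring, ?_⟩, fun x ⟨hx, _⟩ => ?_⟩
    · rwa [norm_div, div_lt_one (norm_pos_iff.mpr hb)]
    · field_simp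
      linear_combination -hx
  · obtain ⟨r, s, hroots, hr, hs⟩ := exists_quadratic_roots_norm_lt_one_lt_norm h hc
    refine ⟨r, ⟨(hroots r).mpr (Or.inl rfl), hr⟩, fun x ⟨hx, hx1⟩ => ?_⟩
    rcases (hroots x).mp hx with rfl | rfl
    · rfl
    · linarith

end QuadraticRoots

theorem norm_symb_le {v : Fin 3 → Fin 3 → ℝ} {i : Fin 3} (hnn : ∀ j, 0 ≤ v i j) {ζ : ℂ}
    (hζ : ‖ζ‖ = 1) : ‖symb v i ζ‖ ≤ symbOne v i := by
  refine norm_add₃_le.trans (le_of_eq ?_)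
  simp [symbOne, hζ, abs_of_nonneg (hnn _)]

theorem sum_norm_symb_lt_one {v : Fin 3 → Fin 3 → ℝ} (hnn : ∀ i j, 0 ≤ v i j)
    (hsum : ∑ i, ∑ j, v i j = 1) {ζ : ℂ} (hζ : ‖ζ‖ = 1) {i₀ : Fin 3}
    (hi₀ : ‖symb v i₀ ζ‖ < symbOne v i₀) :
    ‖symb v 0 ζ‖ + ‖symb v 1 ζ‖ + ‖symb v 2 ζ‖ < 1 := by
  have hlt : ∑ i, ‖symb v i ζ‖ < ∑ i, symbOne v i :=
    Finset.sum_lt_sum (fun i _ => norm_symb_le (hnn i) hζ) ⟨i₀, Finset.mem_univ _, hi₀⟩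
  simpa [Fin.sum_univ_three, symbOne, ← add_assoc, ← hsum] using hlt

theorem stmt15 (v : Fin 3 → Fin 3 → ℝ) (hnn : ∀ i j, 0 ≤ v i j)
    (hsum : ∑ i, ∑ j, v i j = 1)
    (hstrict : ∃ i₀ : Fin 3, ∀ ζ : ℂ, ‖ζ‖ = 1 → ζ ≠ 1 →
      ‖symb v i₀ ζ‖ < symbOne v i₀) :
    ∀ ζ : ℂ, ‖ζ‖ = 1 → ζ ≠ 1 →
      (∀ lam : ℂ,
        symb v 2 ζ * lam ^ 2 + (symb v 1 ζ - 1) * lam + symb v 0 ζ = 0 →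
        ‖lam‖ ≠ 1) ∧
      (∃! lam : ℂ,
        symb v 2 ζ * lam ^ 2 + (symb v 1 ζ - 1) * lam + symb v 0 ζ = 0 ∧
        ‖lam‖ < 1) ∧
      (symb v 2 ζ ≠ 0 → ∃ lam : ℂ,
        symb v 2 ζ * lam ^ 2 + (symb v 1 ζ - 1) * lam + symb v 0 ζ = 0 ∧
        1 < ‖lam‖) := by
  obtain ⟨i₀, hi₀⟩ := hstrict
  intro ζ hζ hζ1
  have h := sum_norm_symb_lt_one hnn hsum hζ (hi₀ ζ hζ hζ1)
  refine ⟨fun _ => norm_ne_one_of_quadratic_root h, existsUnique_quadratic_root_norm_lt_one h,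
    fun hc => ?_⟩
  obtain ⟨r, s, hroots, -, hs⟩ := exists_quadratic_roots_norm_lt_one_lt_norm h hc
  exact ⟨s, (hroots s).mpr (Or.inr rfl), hs⟩
end
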